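/- arXiv:2012.03119 — 3 statements merged into one kernel-verified Lean document; each statement's English description precedes it below -/
import Mathlib

section
/- The converse of the aggregate trigger theorem fails: there exist two assignments A₁, A₂ and a clause C such that C triggers on the associated aggregate assignment but triggers on neither A₁ nor A₂. Concretely, with variables A, B, assignments A₁ = (A ↦ F, B ↦ T), A₂ = (A ↦ T, B ↦ F), and clause A ∨ B, the clause triggers on the aggregate (A ↦ {T,F}, B ↦ {T,F}) but on neither individual assignment. -/
/-- Truth values: True, False, Undef. -/
inductive TV | T | F | U
  deriving DecidableEq, Repr

/-- Negation of a truth value. -/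
def TV.neg : TV → TV
  | .T => .F
  | .F => .T
  | .U => .U

/-- A literal over variable type `V`: a variable or its negation. -/
inductive Lit (V : Type) where
  | pos (v : V)
  | neg (v : V)
  deriving DecidableEq

variable {V : Type}

/-- Evaluation of a literal under an assignment. -/
def Lit.eval (A : V → TV) : Lit V → TV
  | .pos v => A v
  | .neg v => (A v).neg

/-- Evaluation of a literal under an aggregate assignment. -/
def Lit.aeval (G : V → Set TV) : Lit V → Set TV
  | .pos v => G v
  | .neg v => TV.neg '' G v

/-- A clause (list of literals) triggers on an assignment. -/
def triggers (A : V → TV) (C : List (Lit V)) : Prop :=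
  (∀ l ∈ C, l.eval A ≠ TV.T) ∧
    C.length - 1 ≤ C.countP (fun l => decide (l.eval A = TV.F))

open Classical in
/-- A clause triggers on an aggregate assignment. -/
noncomputable def aggTriggers (G : V → Set TV) (C : List (Lit V)) : Prop :=
  (∀ l ∈ C, TV.F ∈ l.aeval G ∨ TV.U ∈ l.aeval G) ∧
    C.length - 1 ≤ C.countP (fun l => decide (TV.F ∈ l.aeval G))

/-- Aggregate assignment associated to a family of assignments. -/
def assocAgg {N : ℕ} (A : Fin N → V → TV) : V → Set TV :=
  fun v => Set.range fun i => A i v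

/-- Aggregate assignment associated to a set of assignments. -/
def setAgg (S : Set (V → TV)) : V → Set TV :=
  fun v => (fun A => A v) '' S

/-- Variables `false` (called `A` in the paper) and `true` (called `B`). -/
def A₁ : Bool → TV := fun v => if v then TV.T else TV.F
def A₂ : Bool → TV := fun v => if v then TV.F else TV.T
/-- The clause `A ∨ B`. -/
def exClause : List (Lit Bool) := [Lit.pos false, Lit.pos true]

theorem not_triggers_of_eval_eq_T {A : V → TV} {C : List (Lit V)} {l : Lit V} (hl : l ∈ C)
    (hT : l.eval A = TV.T) : ¬ triggers A C :=
  fun h => h.1 l hl hT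

theorem aggTriggers_of_forall_F_mem {G : V → Set TV} {C : List (Lit V)}
    (hF : ∀ l ∈ C, TV.F ∈ l.aeval G) : aggTriggers G C := by
  classical
  refine ⟨fun l hl => Or.inl (hF l hl), ?_⟩
  rw [List.countP_eq_length.mpr fun l hl => decide_eq_true (hF l hl)]
  exact Nat.sub_le _ _

theorem eval_mem_aeval_assocAgg {N : ℕ} (A : Fin N → V → TV) (i : Fin N) (l : Lit V) :
    l.eval (A i) ∈ l.aeval (assocAgg A) := by
  cases l with
  | pos v => exact ⟨i, rfl⟩
  | neg v => exact ⟨A i v, ⟨i, rfl⟩, rfl⟩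

theorem aggTriggers_converse_fails :
    aggTriggers (assocAgg ![A₁, A₂]) exClause ∧
      ¬ triggers A₁ exClause ∧ ¬ triggers A₂ exClause := by
  -- Each literal is true under one assignment and false under the other: the aggregate
  -- keeps the `F` of each literal, while each single assignment makes one literal true.
  have hA : TV.F ∈ (Lit.pos false).aeval (assocAgg ![A₁, A₂]) :=
    eval_mem_aeval_assocAgg ![A₁, A₂] 0 _
  have hB : TV.F ∈ (Lit.pos true).aeval (assocAgg ![A₁, A₂]) :=
    eval_mem_aeval_assocAgg ![A₁, A₂] 1 _
  refine ⟨aggTriggers_of_forall_F_mem ?_, ?_, ?_⟩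
  · simpa [exClause] using ⟨hA, hB⟩
  · exact not_triggers_of_eval_eq_T (l := .pos true) (by simp [exClause]) rfl
  · exact not_triggers_of_eval_eq_T (l := .pos false) (by simp [exClause]) rfl
end

section
/- The bitwise trigger test is correct: given N assignments encoded bitwise (for each literal l, an N-bit word isFalse(l) whose i-th bit indicates Aᵢ(l) = F, and isSet(l) whose i-th bit indicates Aᵢ(l) ≠ U), the word computed by folding over the literals of C via oneUndef' = (allFalse AND NOT isSet(l)) OR (oneUndef AND isFalse(l)), allFalse' = allFalse AND isFalse(l) (starting from allFalse = all-ones, oneUndef = 0), and returning allFalse OR oneUndef, has its i-th bit set if and only if C triggers on Aᵢ. -/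
variable {V : Type}

/-- One step of the bitwise trigger fold: state is `(allFalse, oneUndef)`. -/
def bitStep {V : Type} {N : ℕ} (isFalse isSet : Lit V → Fin N → Bool)
    (p : (Fin N → Bool) × (Fin N → Bool)) (l : Lit V) :
    (Fin N → Bool) × (Fin N → Bool) :=
  (fun i => p.1 i && isFalse l i,
   fun i => (p.1 i && !(isSet l i)) || (p.2 i && isFalse l i))

/-- State of the bitwise trigger algorithm after processing a list of literals. -/
def bitState {V : Type} {N : ℕ} (isFalse isSet : Lit V → Fin N → Bool)
    (C : List (Lit V)) : (Fin N → Bool) × (Fin N → Bool) :=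
  C.foldl (bitStep isFalse isSet) (fun _ => true, fun _ => false)

/-- The result of the bitwise trigger algorithm: `allFalse OR oneUndef`. -/
def bitTrigger {V : Type} {N : ℕ} (isFalse isSet : Lit V → Fin N → Bool)
    (C : List (Lit V)) : Fin N → Bool :=
  fun i => (bitState isFalse isSet C).1 i || (bitState isFalse isSet C).2 i

/-! Bit `i` of `allFalse` records that every literal so far is `F` under `Aᵢ`, and bit `i` of
`oneUndef` that none is `T` and exactly one is `U`; a clause triggers iff one of the two holds,
since with no `T` literal at least `|C| - 1` are `F` iff at most one is `U`. -/

namespace TV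

theorem eq_F_iff_ne_T_and_ne_U (t : TV) : t = F ↔ t ≠ T ∧ t ≠ U := by
  cases t <;> simp

end TV

section Clause

variable (A : V → TV) (C : List (Lit V))

def AllFalse : Prop :=
  ∀ l ∈ C, l.eval A = TV.F

def ExactlyOneUndef : Prop :=
  (∀ l ∈ C, l.eval A ≠ TV.T) ∧ C.countP (fun l => decide (l.eval A = TV.U)) = 1

variable {A C}

theorem allFalse_iff_forall_ne_T_and_countP_U_eq_zero :
    AllFalse A C ↔
      (∀ l ∈ C, l.eval A ≠ TV.T) ∧ C.countP (fun l => decide (l.eval A = TV.U)) = 0 := by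
  simp only [AllFalse, List.countP_eq_zero, decide_eq_true_eq, TV.eq_F_iff_ne_T_and_ne_U,
    ← forall_and]

theorem countP_U_add_countP_F (h : ∀ l ∈ C, l.eval A ≠ TV.T) :
    C.countP (fun l => decide (l.eval A = TV.U)) +
      C.countP (fun l => decide (l.eval A = TV.F)) = C.length := by
  rw [List.length_eq_countP_add_countP (fun l => decide (l.eval A = TV.F)), add_comm]
  congr 1
  refine List.countP_congr fun l hl => ?_
  have hl := h l hl
  cases hv : l.eval A <;> simp_all

theorem triggers_iff_allFalse_or_exactlyOneUndef :
    triggers A C ↔ AllFalse A C ∨ ExactlyOneUndef A C := by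
  rw [allFalse_iff_forall_ne_T_and_countP_U_eq_zero, ExactlyOneUndef, ← and_or_left, triggers]
  refine and_congr_right fun h => ?_
  have := countP_U_add_countP_F h
  omega

theorem allFalse_append_singleton (l : Lit V) :
    AllFalse A (C ++ [l]) ↔ AllFalse A C ∧ l.eval A = TV.F := by
  simp [AllFalse, or_imp, forall_and]

theorem exactlyOneUndef_append_singleton (l : Lit V) :
    ExactlyOneUndef A (C ++ [l]) ↔
      AllFalse A C ∧ l.eval A = TV.U ∨ ExactlyOneUndef A C ∧ l.eval A = TV.F := by
  rw [allFalse_iff_forall_ne_T_and_countP_U_eq_zero, ExactlyOneUndef, ExactlyOneUndef]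
  simp only [List.mem_append, List.mem_singleton, or_imp, forall_and, forall_eq,
    List.countP_append, List.countP_singleton, decide_eq_true_eq]
  cases l.eval A <;> simp

end Clause

section Bitwise

variable {N : ℕ} {isFalse isSet : Lit V → Fin N → Bool} {A : V → TV} {i : Fin N}

theorem bitState_append_singleton (C : List (Lit V)) (l : Lit V) :
    bitState isFalse isSet (C ++ [l]) = bitStep isFalse isSet (bitState isFalse isSet C) l := by
  simp [bitState, List.foldl_append]

theorem bitState_fst_apply_iff (hF : ∀ l, isFalse l i = decide (l.eval A = TV.F))
    (C : List (Lit V)) : (bitState isFalse isSet C).1 i = true ↔ AllFalse A C := by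
  induction C using List.reverseRecOn with
  | nil => simp [bitState, AllFalse]
  | append_singleton C l ih =>
    simp [bitState_append_singleton, bitStep, ih, hF, allFalse_append_singleton]

theorem bitState_snd_apply_iff (hF : ∀ l, isFalse l i = decide (l.eval A = TV.F))
    (hS : ∀ l, isSet l i = decide (l.eval A ≠ TV.U)) (C : List (Lit V)) :
    (bitState isFalse isSet C).2 i = true ↔ ExactlyOneUndef A C := by
  induction C using List.reverseRecOn with
  | nil => simp [bitState, ExactlyOneUndef]
  | append_singleton C l ih =>
    simp [bitState_append_singleton, bitStep, ih, hF, hS, bitState_fst_apply_iff hF,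
      exactlyOneUndef_append_singleton]

end Bitwise

theorem bitTrigger_correct {V : Type} {N : ℕ} (A : Fin N → V → TV)
    (isFalse isSet : Lit V → Fin N → Bool)
    (hFalse : ∀ l i, isFalse l i = decide (Lit.eval (A i) l = TV.F))
    (hSet : ∀ l i, isSet l i = decide (Lit.eval (A i) l ≠ TV.U))
    (C : List (Lit V)) :
    ∀ i : Fin N, bitTrigger isFalse isSet C i = true ↔ triggers (A i) C := by
  intro i
  rw [triggers_iff_allFalse_or_exactlyOneUndef, bitTrigger, Bool.or_eq_true,
    bitState_fst_apply_iff (hFalse · i), bitState_snd_apply_iff (hFalse · i) (hSet · i)]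
end

section
/- The two-level (group) testing procedure is sound and complete: partition assignments into groups, each group having its associated aggregate assignment; if one tests clause C on each individual assignment only within groups whose aggregate tests positive, then the set of individual assignments reported is exactly the set of all assignments on which C triggers. -/
variable {V : Type}

lemma Lit.eval_mem_aeval_setAgg {S : Set (V → TV)} {A : V → TV} (hA : A ∈ S) (l : Lit V) :
    l.eval A ∈ l.aeval (setAgg S) := by
  cases l with
  | pos v => exact ⟨A, hA, rfl⟩
  | neg v => exact ⟨A v, ⟨A, hA, rfl⟩, rfl⟩

/-- Completeness of group testing: every literal value of a member of a group lies in the group's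
aggregate, so a clause triggering on the member also triggers on the aggregate. -/
lemma aggTriggers_of_triggers {G : V → Set TV} {A : V → TV} {C : List (Lit V)}
    (hAG : ∀ l ∈ C, l.eval A ∈ l.aeval G) (hA : triggers A C) : aggTriggers G C := by
  obtain ⟨hNonTrue, hFalseCount⟩ := hA
  refine ⟨fun l hl => ?_, hFalseCount.trans (List.countP_mono_left fun l hl hF => ?_)⟩
  · have hmem := hAG l hl
    cases hval : l.eval A with
    | T => exact absurd hval (hNonTrue l hl)
    | F => exact .inl (hval ▸ hmem)
    | U => exact .inr (hval ▸ hmem)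
  · simp only [decide_eq_true_eq] at hF ⊢
    exact hF ▸ hAG l hl

theorem group_testing_sound_complete {V ι : Type} (S : ι → Set (V → TV))
    (C : List (Lit V)) :
    {A : V → TV | ∃ j : ι, A ∈ S j ∧ aggTriggers (setAgg (S j)) C ∧ triggers A C} =
      {A : V → TV | (∃ j : ι, A ∈ S j) ∧ triggers A C} := by
  ext A
  constructor
  · rintro ⟨j, hA, -, hTrig⟩
    exact ⟨⟨j, hA⟩, hTrig⟩
  · rintro ⟨⟨j, hA⟩, hTrig⟩
    exact ⟨j, hA, aggTriggers_of_triggers (fun l _ => l.eval_mem_aeval_setAgg hA) hTrig, hTrig⟩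
end
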